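/- arXiv:2603.23378 — 3 statements merged into one kernel-verified Lean document; each statement's English description precedes it below -/
import Mathlib

section
/- The number of Catalan words of length n in which every letter is at most k equals the number of Dyck paths of semilength n whose height is at most k. -/
/-- A Catalan word: first letter is 1, all letters positive,
and each letter is at most the previous letter plus one. -/
def IsCatalanWord (w : List ℕ) : Prop :=
  (∀ x ∈ w.head?, x = 1) ∧ (∀ a ∈ w, 1 ≤ a) ∧ w.Chain' (fun a b => b ≤ a + 1)

/-- A Dyck path encoded as a list of booleans (`true` = up step, `false` = down step). -/
def IsDyckPath (p : List Bool) : Prop :=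
  p.count true = p.count false ∧ ∀ t, t <+: p → t.count false ≤ t.count true

namespace CatalanDyckAux

/-- Continuation of a Catalan word from previous value `prev`. -/
def Cont (prev : ℕ) (w : List ℕ) : Prop :=
  (∀ x ∈ w.head?, x ≤ prev + 1) ∧ (∀ a ∈ w, 1 ≤ a) ∧ w.Chain' (fun a b => b ≤ a + 1)

/-- Encoding of a Catalan word continuation as a Dyck path piece. -/
def go : ℕ → List ℕ → List Bool
  | prev, [] => List.replicate prev false
  | prev, a :: rest => List.replicate (prev + 1 - a) false ++ true :: go a rest

lemma cont_cons {prev a : ℕ} {rest : List ℕ} (h : Cont prev (a :: rest)) :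
    Cont a rest ∧ 1 ≤ a ∧ a ≤ prev + 1 := by
  obtain ⟨h1, h2, h3⟩ := h
  refine ⟨⟨?_, fun x hx => h2 x (List.mem_cons_of_mem _ hx), h3.tail⟩,
    h2 a List.mem_cons_self, h1 a rfl⟩
  intro x hx
  cases rest with
  | nil => simp at hx
  | cons b t =>
    simp only [List.head?_cons, Option.mem_some_iff] at hx
    subst hx
    exact (List.isChain_cons_cons.mp h3).1

lemma cont_cons_of {prev a : ℕ} {rest : List ℕ} (hc : Cont a rest) (h1 : 1 ≤ a)
    (h2 : a ≤ prev + 1) : Cont prev (a :: rest) := by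
  obtain ⟨c1, c2, c3⟩ := hc
  refine ⟨?_, ?_, ?_⟩
  · intro x hx; simp only [List.head?_cons, Option.mem_some_iff] at hx; omega
  · intro x hx
    rcases List.mem_cons.mp hx with h | h
    · omega
    · exact c2 x h
  · cases rest with
    | nil => exact List.isChain_singleton _
    | cons b t => exact List.isChain_cons_cons.mpr ⟨c1 b rfl, c3⟩

lemma count_true_prefix_replicate {t : List Bool} {m : ℕ}
    (h : t <+: List.replicate m false) : t.count true = 0 := by
  rw [List.count_eq_zero]
  intro ht
  have := List.eq_of_mem_replicate (h.subset ht)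
  simp at this

lemma prefix_append_cases {α : Type*} :
    ∀ (A : List α) {B t : List α}, t <+: A ++ B → t <+: A ∨ ∃ s, t = A ++ s ∧ s <+: B
  | [], _, t, h => Or.inr ⟨t, rfl, h⟩
  | a :: A, B, [], _ => Or.inl (List.nil_prefix)
  | a :: A, B, x :: t, h => by
    rw [List.cons_append, List.cons_prefix_cons] at h
    obtain ⟨rfl, h⟩ := h
    rcases prefix_append_cases A h with h' | ⟨s, rfl, hs⟩
    · exact Or.inl (List.cons_prefix_cons.mpr ⟨rfl, h'⟩)
    · exact Or.inr ⟨s, rfl, hs⟩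

lemma count_true_go : ∀ (prev : ℕ) (w : List ℕ), (go prev w).count true = w.length
  | prev, [] => by simp [go, List.count_replicate]
  | prev, a :: rest => by
    simp [go, List.count_append, List.count_replicate, count_true_go a rest]

lemma count_false_go : ∀ (prev : ℕ) (w : List ℕ), Cont prev w →
    (go prev w).count false = prev + w.length
  | prev, [], _ => by simp [go, List.count_replicate]
  | prev, a :: rest, h => by
    obtain ⟨hc, h1, h2⟩ := cont_cons h
    simp only [go, List.count_append, List.count_replicate, List.count_cons,
      count_false_go a rest hc, List.length_cons]
    simp
    omega

lemma prefix_lower : ∀ (prev : ℕ) (w : List ℕ), Cont prev w →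
    ∀ t, t <+: go prev w → t.count false ≤ t.count true + prev
  | prev, [], _, t, ht => by
    have h1 : t.count false ≤ t.length := List.count_le_length
    have h2 := ht.length_le
    simp [go] at h2
    omega
  | prev, a :: rest, h, t, ht => by
    obtain ⟨hc, h1, h2⟩ := cont_cons h
    rw [go] at ht
    rcases prefix_append_cases _ ht with ht' | ⟨s, rfl, hs⟩
    · have hlen := ht'.length_le
      have h3 : t.count false ≤ t.length := List.count_le_length
      simp at hlen
      omega
    · have hs' : s = [] ∨ ∃ s', s = true :: s' ∧ s' <+: go a rest := by
        cases s with
        | nil => exact Or.inl rfl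
        | cons x s' =>
          rw [List.cons_prefix_cons] at hs
          exact Or.inr ⟨s', by rw [hs.1], hs.2⟩
      rcases hs' with rfl | ⟨s', rfl, hs'⟩
      · simp only [List.append_nil, List.count_replicate]
        simp
        omega
      · have ih := prefix_lower a rest hc s' hs'
        simp only [List.count_append, List.count_replicate, List.count_cons]
        simp
        omega

lemma prefix_upper : ∀ (prev k : ℕ) (w : List ℕ), Cont prev w → (∀ a ∈ w, a ≤ k) →
    prev ≤ k → ∀ t, t <+: go prev w → t.count true + prev ≤ t.count false + k
  | prev, k, [], _, _, hpk, t, ht => by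
    rw [go] at ht
    have := count_true_prefix_replicate ht
    omega
  | prev, k, a :: rest, h, hbd, hpk, t, ht => by
    obtain ⟨hc, h1, h2⟩ := cont_cons h
    have hak : a ≤ k := hbd a List.mem_cons_self
    rw [go] at ht
    rcases prefix_append_cases _ ht with ht' | ⟨s, rfl, hs⟩
    · have := count_true_prefix_replicate ht'
      omega
    · have hs' : s = [] ∨ ∃ s', s = true :: s' ∧ s' <+: go a rest := by
        cases s with
        | nil => exact Or.inl rfl
        | cons x s' =>
          rw [List.cons_prefix_cons] at hs
          exact Or.inr ⟨s', by rw [hs.1], hs.2⟩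
      rcases hs' with rfl | ⟨s', rfl, hs'⟩
      · simp only [List.append_nil, List.count_replicate]
        simp
        omega
      · have ih := prefix_upper a k rest hc (fun x hx => hbd x (List.mem_cons_of_mem _ hx))
          hak s' hs'
        simp only [List.count_append, List.count_replicate, List.count_cons]
        simp
        omega

lemma replicate_block_inj : ∀ (m m' : ℕ) (l l' : List Bool),
    List.replicate m false ++ true :: l = List.replicate m' false ++ true :: l' →
    m = m' ∧ l = l'
  | 0, 0, l, l', h => by simpa using h
  | 0, m' + 1, l, l', h => by simp [List.replicate_succ] at h
  | m + 1, 0, l, l', h => by simp [List.replicate_succ] at h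
  | m + 1, m' + 1, l, l', h => by
    simp only [List.replicate_succ, List.cons_append, List.cons.injEq, true_and] at h
    obtain ⟨hm, hl⟩ := replicate_block_inj m m' l l' h
    exact ⟨by omega, hl⟩

lemma go_inj : ∀ (w : List ℕ) (prev : ℕ) (w' : List ℕ), Cont prev w → Cont prev w' →
    w.length = w'.length → go prev w = go prev w' → w = w'
  | [], prev, [], _, _, _, _ => rfl
  | [], prev, a :: r, _, _, hlen, _ => by simp at hlen
  | a :: r, prev, [], _, _, hlen, _ => by simp at hlen
  | a :: r, prev, a' :: r', h, h', hlen, heq => by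
    obtain ⟨hc, h1, h2⟩ := cont_cons h
    obtain ⟨hc', h1', h2'⟩ := cont_cons h'
    rw [go, go] at heq
    obtain ⟨hm, hl⟩ := replicate_block_inj _ _ _ _ heq
    have ha : a = a' := by omega
    subst ha
    simp only [List.length_cons, Nat.add_right_cancel_iff] at hlen
    rw [go_inj r a r' hc hc' hlen hl]

lemma go_surj (N : ℕ) : ∀ (p : List Bool) (prev k : ℕ), p.length ≤ N →
    p.count false = p.count true + prev →
    (∀ t, t <+: p → t.count false ≤ t.count true + prev) →
    (∀ t, t <+: p → t.count true + prev ≤ t.count false + k) →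
    prev ≤ k →
    ∃ w, Cont prev w ∧ (∀ a ∈ w, a ≤ k) ∧ go prev w = p ∧ w.length = p.count true := by
  induction N with
  | zero =>
    intro p prev k hN hbal hlow hup hpk
    have hp : p = [] := List.length_eq_zero_iff.mp (Nat.le_zero.mp hN)
    subst hp
    simp only [List.count_nil] at hbal ⊢
    refine ⟨[], ⟨by simp, by simp, List.isChain_nil⟩, by simp, ?_, by simp⟩
    simp [go]
    omega
  | succ N IH =>
    intro p prev k hN hbal hlow hup hpk
    by_cases h0 : p.count true = 0
    · -- all letters false
      have hall : ∀ x ∈ p, x = false := by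
        intro x hx
        have hxt : x ≠ true := fun h => (List.count_eq_zero.mp h0) (h ▸ hx)
        simpa using hxt
      have hcf : p.count false = p.length :=
        List.count_eq_length.mpr (fun b hb => (hall b hb).symm)
      have hp : p = List.replicate prev false := by
        have := List.eq_replicate_of_mem hall
        rw [this]
        congr 1
        omega
      refine ⟨[], ⟨by simp, by simp, List.isChain_nil⟩, by simp, ?_, by simp [h0]⟩
      rw [hp]; rfl
    · -- p starts with some falses then a true
      set j := (p.takeWhile (fun b => !b)).length with hj
      have htw : p.takeWhile (fun b => !b) = List.replicate j false := by
        rw [hj]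
        apply List.eq_replicate_of_mem
        intro x hx
        have := List.mem_takeWhile_imp hx
        simpa using this
      have hd : ∃ rest, p.dropWhile (fun b => !b) = true :: rest := by
        cases hdw : p.dropWhile (fun b => !b) with
        | nil =>
          exfalso
          apply h0
          rw [← List.takeWhile_append_dropWhile (p := fun b => !b) (l := p), hdw, List.append_nil, htw]
          simp [List.count_replicate]
        | cons x rest =>
          have hh := List.head?_dropWhile_not (fun b => !b) p
          rw [hdw] at hh
          simp at hh
          exact ⟨rest, by rw [hh]⟩
      obtain ⟨rest, hdw⟩ := hd
      have hp : p = List.replicate j false ++ true :: rest := by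
        rw [← List.takeWhile_append_dropWhile (p := fun b => !b) (l := p), htw, hdw]
      have hcts : p.count true = 1 + rest.count true := by
        rw [hp]; simp [List.count_append, List.count_replicate, List.count_cons]; omega
      have hcfs : p.count false = j + rest.count false := by
        rw [hp]; simp [List.count_append, List.count_replicate, List.count_cons]
      have hlenp : p.length = j + 1 + rest.length := by
        rw [hp]; simp; omega
      -- j ≤ prev
      have hjprev : j ≤ prev := by
        have hpre : List.replicate j false <+: p := hp ▸ List.prefix_append _ _
        have := hlow _ hpre
        simpa [List.count_replicate] using this
      -- the letter a
      have hjk : 1 + prev ≤ j + k := by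
        have hpre : List.replicate j false ++ [true] <+: p := by
          rw [hp]
          refine (List.prefix_append_right_inj _).mpr ?_
          exact ⟨rest, rfl⟩
        have := hup _ hpre
        simpa [List.count_append, List.count_replicate] using this
      set a := prev + 1 - j with ha
      have hrest_pre : ∀ t, t <+: rest →
          (List.replicate j false ++ true :: t) <+: p := by
        intro t ht
        rw [hp]
        refine (List.prefix_append_right_inj _).mpr ?_
        exact List.cons_prefix_cons.mpr ⟨rfl, ht⟩
      obtain ⟨w', hcont', hbd', hgw', hwl'⟩ := IH rest a k
        (by omega)
        (by
          have := hbal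
          omega)
        (by
          intro t ht
          have := hlow _ (hrest_pre t ht)
          simp [List.count_append, List.count_replicate, List.count_cons] at this
          omega)
        (by
          intro t ht
          have := hup _ (hrest_pre t ht)
          simp [List.count_append, List.count_replicate, List.count_cons] at this
          omega)
        (by omega)
      refine ⟨a :: w', cont_cons_of hcont' (by omega) (by omega), ?_, ?_, ?_⟩
      · intro x hx
        rcases List.mem_cons.mp hx with rfl | h
        · omega
        · exact hbd' x h
      · rw [go, hgw', hp]
        congr 2
        omega
      · simp
        omega

end CatalanDyckAux

theorem catalan_words_bounded_eq_dyck_bounded_height (n k : ℕ) :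
    {w : List ℕ | IsCatalanWord w ∧ w.length = n ∧ ∀ a ∈ w, a ≤ k}.ncard =
    {p : List Bool | IsDyckPath p ∧ p.count true = n ∧
      ∀ t, t <+: p → t.count true ≤ t.count false + k}.ncard := by
  classical
  have hinj : Set.InjOn (CatalanDyckAux.go 0)
      {w : List ℕ | IsCatalanWord w ∧ w.length = n ∧ ∀ a ∈ w, a ≤ k} := by
    rintro w ⟨⟨hw1, hw2, hw3⟩, hwl, _⟩ w' ⟨⟨hw1', hw2', hw3'⟩, hwl', _⟩ heq
    exact CatalanDyckAux.go_inj w 0 w' ⟨fun x hx => le_of_eq (hw1 x hx), hw2, hw3⟩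
      ⟨fun x hx => le_of_eq (hw1' x hx), hw2', hw3'⟩ (hwl.trans hwl'.symm) heq
  have himg : CatalanDyckAux.go 0 '' {w : List ℕ | IsCatalanWord w ∧ w.length = n ∧
        ∀ a ∈ w, a ≤ k} =
      {p : List Bool | IsDyckPath p ∧ p.count true = n ∧
        ∀ t, t <+: p → t.count true ≤ t.count false + k} := by
    ext p
    constructor
    · rintro ⟨w, ⟨⟨h1, h2, h3⟩, hl, hb⟩, rfl⟩
      have hcont : CatalanDyckAux.Cont 0 w := ⟨fun x hx => le_of_eq (h1 x hx), h2, h3⟩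
      refine ⟨⟨?_, ?_⟩, ?_, ?_⟩
      · rw [CatalanDyckAux.count_true_go, CatalanDyckAux.count_false_go 0 w hcont]
        omega
      · intro t ht
        have := CatalanDyckAux.prefix_lower 0 w hcont t ht
        omega
      · rw [CatalanDyckAux.count_true_go]; exact hl
      · intro t ht
        have := CatalanDyckAux.prefix_upper 0 k w hcont hb (Nat.zero_le k) t ht
        omega
    · rintro ⟨⟨hbal, hlow⟩, hct, hup⟩
      obtain ⟨w, hcont, hbd, hgw, hwl⟩ := CatalanDyckAux.go_surj p.length p 0 k le_rfl
        (by omega)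
        (fun t ht => by have := hlow t ht; omega)
        (fun t ht => by have := hup t ht; omega)
        (Nat.zero_le k)
      refine ⟨w, ⟨⟨?_, hcont.2.1, hcont.2.2⟩, by omega, hbd⟩, hgw⟩
      intro x hx
      have h1 := hcont.1 x hx
      have h2 := hcont.2.1 x (List.mem_of_mem_head? hx)
      omega
  rw [← himg, Set.ncard_image_of_injOn hinj]
end

section
/- Let f_k(n) denote the number of Catalan words of length n with all letters at most k. Then the generating function sum_n f_k(n) z^n equals h_k(z)/g_k(z), where the polynomials g_k satisfy g_0 = 1, g_1 = 1 - z, and g_k = g_{k-1} - z * g_{k-2} for k ≥ 2, and h_k = g_{k-1}. Equivalently, f_k(n) satisfies, for each fixed k, a linear recurrence with characteristic polynomial determined by g_k. -/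
open Polynomial PowerSeries in
/-- Denominator polynomials of the convergents of the continued fraction
`1/(1 - z/(1 - z/(1 - ...)))`. -/
noncomputable def g : ℕ → Polynomial ℚ
  | 0 => 1
  | 1 => 1 - Polynomial.X
  | (k + 2) => g (k + 1) - Polynomial.X * g k

/-! ### Auxiliary definitions -/

/-- The set of Catalan words of length `n` with letters bounded by `k`. -/
def Sset (k n : ℕ) : Set (List ℕ) :=
  {w : List ℕ | IsCatalanWord w ∧ w.length = n ∧ ∀ a ∈ w, a ≤ k}

/-- The predicate "at least 2", used to split off the initial ascent. -/
def Pb : ℕ → Bool := fun a => 2 ≤ a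

/-- The gluing map. -/
def emb (p : List ℕ × List ℕ) : List ℕ := 1 :: (p.1.map (· + 1) ++ p.2)

lemma Sset_finite (k n : ℕ) : (Sset k n).Finite := by
  have hsub : Sset k n ⊆
      (fun f : Fin n → Fin (k + 1) => (List.ofFn fun i => (f i : ℕ))) '' Set.univ := by
    rintro w ⟨-, hlen, hbd⟩
    refine ⟨fun i => ⟨w.get (Fin.cast hlen.symm i), ?_⟩, trivial, ?_⟩
    · exact Nat.lt_succ_of_le (hbd _ (w.get_mem _))
    · apply List.ext_getElem
      · simp [hlen]
      · intro i h1 h2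
        simp [List.getElem_ofFn, Fin.cast]
  exact (Set.finite_univ.image _).subset hsub

lemma takeWhile_append_all {l₁ l₂ : List ℕ}
    (h1 : ∀ a ∈ l₁, Pb a = true) (h2 : ∀ x ∈ l₂.head?, Pb x = false) :
    (l₁ ++ l₂).takeWhile Pb = l₁ ∧ (l₁ ++ l₂).dropWhile Pb = l₂ := by
  induction l₁ with
  | nil =>
    simp only [List.nil_append]
    cases l₂ with
    | nil => simp
    | cons b t =>
      have := h2 b (by simp)
      constructor
      · rw [List.takeWhile_cons_of_neg (by simp [this])]
      · rw [List.dropWhile_cons_of_neg (by simp [this])]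
  | cons a s ih =>
    have ha := h1 a (by simp)
    have hrec := ih (fun x hx => h1 x (by simp [hx])) 
    constructor
    · rw [List.cons_append, List.takeWhile_cons_of_pos ha, hrec.1]
    · rw [List.cons_append, List.dropWhile_cons_of_pos ha, hrec.2]

lemma head_dropWhile_false : ∀ (l : List ℕ), ∀ x ∈ (l.dropWhile Pb).head?, Pb x = false := by
  intro l
  induction l with
  | nil => simp
  | cons a t ih =>
    intro x hx
    by_cases h : Pb a
    · rw [List.dropWhile_cons_of_pos h] at hx; exact ih x hx
    · rw [List.dropWhile_cons_of_neg h] at hx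
      simp only [List.head?_cons, Option.mem_some_iff] at hx
      subst hx; simpa using h

lemma emb_tail (v r : List ℕ) (h1 : ∀ a ∈ v, 1 ≤ a) (h2 : ∀ x ∈ r.head?, x = 1) :
    (v.map (· + 1) ++ r).takeWhile Pb = v.map (· + 1) ∧
    (v.map (· + 1) ++ r).dropWhile Pb = r := by
  apply takeWhile_append_all
  · intro a ha
    simp only [List.mem_map] at ha
    obtain ⟨b, hb, rfl⟩ := ha
    have := h1 b hb
    simp [Pb]; omega
  · intro x hx
    have := h2 x hx
    simp [Pb, this]

lemma mem_step (k n : ℕ) (w : List ℕ) :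
    w ∈ Sset (k+1) (n+1) ↔ ∃ i ∈ Finset.range (n+1),
      w ∈ emb '' ((Sset k i) ×ˢ (Sset (k+1) (n-i))) := by
  constructor
  · rintro ⟨⟨hhead, hpos, hchain⟩, hlen, hbd⟩
    obtain ⟨a, t, rfl⟩ : ∃ a t, w = a :: t := by
      cases w with
      | nil => simp at hlen
      | cons a t => exact ⟨a, t, rfl⟩
    have ha : a = 1 := hhead a (by simp)
    subst ha
    set s := t.takeWhile Pb with hs
    set r := t.dropWhile Pb with hr
    have hst : s ++ r = t := List.takeWhile_append_dropWhile (p := Pb) (l := t)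
    have hmem_s : ∀ a ∈ s, 2 ≤ a := by
      intro a ha
      have := List.mem_takeWhile_imp ha
      simpa [Pb] using this
    have htlen : t.length = n := by simpa using hlen
    have hslen : s.length ≤ n := by
      rw [← htlen]; exact List.Sublist.length_le (List.takeWhile_sublist _)
    have hchain_t : t.Chain' (fun a b => b ≤ a + 1) := (List.isChain_cons.1 hchain).2
    have hchain_sr : _ := (List.isChain_append (l₁ := s) (l₂ := r)).1 (hst ▸ hchain_t)
    have hmem_t : ∀ x ∈ s, x ∈ t := fun x hx => (List.takeWhile_sublist _).mem hx
    have hmem_r : ∀ x ∈ r, x ∈ t := fun x hx => (List.dropWhile_sublist _).mem hx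
    have hrhead : ∀ x ∈ r.head?, x = 1 := by
      intro x hx
      have h1 := head_dropWhile_false t x hx
      have h2 : x ∈ t := hmem_r x (List.mem_of_mem_head? hx)
      have := hpos x (by simp [h2])
      simp only [Pb, decide_eq_false_iff_not, not_le] at h1
      omega
    refine ⟨s.length, by simp [Nat.lt_succ_of_le hslen], (s.map (· - 1), r), ⟨?_, ?_⟩, ?_⟩
    · -- s.map (· - 1) ∈ Sset k s.length
      refine ⟨⟨?_, ?_, ?_⟩, by simp, ?_⟩
      · -- head
        intro x hx
        cases hs' : s with
        | nil => simp [hs'] at hx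
        | cons b s' =>
          have hb2 : 2 ≤ b := hmem_s b (by simp [hs'])
          have htb : t.head? = some b := by rw [← hst, hs']; simp
          have hb_le : b ≤ 2 := by
            have := (List.isChain_cons.1 hchain).1 b (by
              simpa [htb] using (Option.mem_some_iff.2 rfl : b ∈ some b))
            omega
          have hb : b = 2 := le_antisymm hb_le hb2
          simp [hs', hb] at hx
          omega
      · intro a ha
        simp only [List.mem_map] at ha
        obtain ⟨b, hb, rfl⟩ := ha
        have := hmem_s b hb
        omega
      · refine List.isChain_map_of_isChain _ ?_ hchain_sr.1
        intro a b hab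
        omega
      · intro a ha
        simp only [List.mem_map] at ha
        obtain ⟨b, hb, rfl⟩ := ha
        have := hbd b (by simp [hmem_t b hb])
        omega
    · -- r ∈ Sset (k+1) (n - s.length)
      refine ⟨⟨hrhead, fun a ha => hpos a (by simp [hmem_r a ha]), hchain_sr.2.1⟩, ?_, 
        fun a ha => hbd a (by simp [hmem_r a ha])⟩
      show r.length = n - s.length
      have := congrArg List.length hst
      simp only [List.length_append] at this
      omega
    · -- emb _ = 1 :: t
      simp only [emb]
      congr 1
      rw [← hst]
      congr 1
      rw [List.map_map]
      conv_rhs => rw [← List.map_id s]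
      apply List.map_congr_left
      intro a ha
      have := hmem_s a ha
      simp; omega
  · rintro ⟨i, hi, ⟨v, r⟩, ⟨⟨⟨vhead, vpos, vchain⟩, vlen, vbd⟩, ⟨rhead, rpos, rchain⟩, rlen, rbd⟩, rfl⟩
    simp only [Finset.mem_range] at hi
    refine ⟨⟨?_, ?_, ?_⟩, ?_, ?_⟩
    · intro x hx; simp only [emb, List.head?_cons, Option.mem_some_iff] at hx; omega
    · intro a ha
      simp only [emb, List.mem_cons, List.mem_append, List.mem_map] at ha
      rcases ha with rfl | ⟨b, hb, rfl⟩ | h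
      · exact le_refl 1
      · omega
      · exact rpos a h
    · -- chain'
      simp only [emb]
      refine List.isChain_cons.2 ?_
      constructor
      · intro y hy
        rcases hv : v with _ | ⟨b, v'⟩
        · subst hv
          simp only [List.map_nil, List.nil_append] at hy
          have := rhead y hy
          omega
        · have hb1 : b = 1 := vhead b (by simp [hv])
          simp [hv, hb1] at hy
          omega
      · rw [List.isChain_append]
        refine ⟨List.isChain_map_of_isChain _ (fun a b hab => by omega) vchain, rchain, ?_⟩
        intro x hx y hy
        have := rhead y hy
        omega
    · simp only [emb, List.length_cons, List.length_append, List.length_map, vlen, rlen]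
      omega
    · intro a ha
      simp only [emb, List.mem_cons, List.mem_append, List.mem_map] at ha
      rcases ha with rfl | ⟨b, hb, rfl⟩ | h
      · omega
      · have := vbd b hb; omega
      · exact rbd a h

lemma emb_injOn (k n i : ℕ) : Set.InjOn emb ((Sset k i) ×ˢ (Sset (k+1) (n-i))) := by
  rintro ⟨v, r⟩ ⟨hv, hr⟩ ⟨v', r'⟩ ⟨hv', hr'⟩ heq
  have h1 := emb_tail v r hv.1.2.1 hr.1.1
  have h2 := emb_tail v' r' hv'.1.2.1 hr'.1.1
  simp only [emb, List.cons.injEq, true_and] at heq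
  have htw : v.map (· + 1) = v'.map (· + 1) := by
    rw [← h1.1, ← h2.1, heq]
  have hvv : v = v' := by
    have : Function.Injective (fun x : ℕ => x + 1) := fun a b h => by simpa using h
    exact List.map_injective_iff.2 this htw
  have hrr : r = r' := by rw [← h1.2, ← h2.2, heq]
  simp [hvv, hrr]

lemma emb_takeWhile_len (k n i : ℕ) (w : List ℕ)
    (hw : w ∈ emb '' ((Sset k i) ×ˢ (Sset (k+1) (n-i)))) :
    (w.tail.takeWhile Pb).length = i := by
  obtain ⟨⟨v, r⟩, ⟨hv, hr⟩, rfl⟩ := hw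
  have h1 := emb_tail v r hv.1.2.1 hr.1.1
  simp only [emb, List.tail_cons]
  rw [h1.1]
  simp [hv.2.1]

lemma ncard_step (k n : ℕ) :
    (Sset (k+1) (n+1)).ncard
      = ∑ i ∈ Finset.range (n+1), (Sset k i).ncard * (Sset (k+1) (n-i)).ncard := by
  classical
  have key : (Sset_finite (k+1) (n+1)).toFinset =
      (Finset.range (n+1)).biUnion (fun i =>
        ((Sset_finite k i).toFinset ×ˢ (Sset_finite (k+1) (n-i)).toFinset).image emb) := by
    ext w
    simp only [Set.Finite.mem_toFinset, Finset.mem_biUnion, Finset.mem_image,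
      Finset.mem_product, Set.mem_image, Set.mem_prod]
    rw [mem_step]
    constructor
    · rintro ⟨i, hi, p, hp, rfl⟩
      exact ⟨i, hi, p, ⟨by simpa using hp.1, by simpa using hp.2⟩, rfl⟩
    · rintro ⟨i, hi, p, hp, rfl⟩
      exact ⟨i, hi, p, ⟨by simpa using hp.1, by simpa using hp.2⟩, rfl⟩
  have hdisj : ∀ i ∈ Finset.range (n+1), ∀ j ∈ Finset.range (n+1), i ≠ j →
      Disjoint (((Sset_finite k i).toFinset ×ˢ (Sset_finite (k+1) (n-i)).toFinset).image emb)
        (((Sset_finite k j).toFinset ×ˢ (Sset_finite (k+1) (n-j)).toFinset).image emb) := by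
    intro i _ j _ hij
    rw [Finset.disjoint_left]
    intro w hwi hwj
    apply hij
    have h1 : (w.tail.takeWhile Pb).length = i := by
      apply emb_takeWhile_len k n i w
      obtain ⟨p, hp, rfl⟩ := Finset.mem_image.1 hwi
      rw [Finset.mem_product] at hp
      exact ⟨p, ⟨by simpa using hp.1, by simpa using hp.2⟩, rfl⟩
    have h2 : (w.tail.takeWhile Pb).length = j := by
      apply emb_takeWhile_len k n j w
      obtain ⟨p, hp, rfl⟩ := Finset.mem_image.1 hwj
      rw [Finset.mem_product] at hp
      exact ⟨p, ⟨by simpa using hp.1, by simpa using hp.2⟩, rfl⟩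
    omega
  rw [Set.ncard_eq_toFinset_card _ (Sset_finite _ _), key, Finset.card_biUnion hdisj]
  apply Finset.sum_congr rfl
  intro i _
  rw [Finset.card_image_of_injOn (by
    rw [Finset.coe_product, Set.Finite.coe_toFinset, Set.Finite.coe_toFinset]
    exact emb_injOn k n i)]
  rw [Finset.card_product, Set.ncard_eq_toFinset_card _ (Sset_finite k i),
    Set.ncard_eq_toFinset_card _ (Sset_finite (k+1) (n-i))]

lemma Sset_zero (k : ℕ) : Sset k 0 = {([] : List ℕ)} := by
  ext w
  constructor
  · rintro ⟨-, hlen, -⟩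
    simpa using List.length_eq_zero_iff.1 hlen
  · rintro rfl
    exact ⟨⟨by simp, by simp, List.isChain_nil⟩, rfl, by simp⟩

lemma Sset_one (n : ℕ) : Sset 1 n = {List.replicate n 1} := by
  ext w
  constructor
  · rintro ⟨⟨-, hpos, -⟩, hlen, hbd⟩
    refine Set.mem_singleton_iff.2 (List.eq_replicate_iff.2 ⟨hlen, fun b hb => ?_⟩)
    have := hpos b hb; have := hbd b hb; omega
  · rintro rfl
    refine ⟨⟨?_, ?_, List.isChain_replicate_of_rel n (by omega)⟩, by simp, ?_⟩
    · intro x hx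
      cases n with
      | zero => simp at hx
      | succ m => simp [List.replicate_succ] at hx; omega
    · intro a ha; simp [List.eq_of_mem_replicate ha]
    · intro a ha; simp [List.eq_of_mem_replicate ha]

lemma ncard_Sset_zero (k : ℕ) : (Sset k 0).ncard = 1 := by rw [Sset_zero]; simp
lemma ncard_Sset_one (n : ℕ) : (Sset 1 n).ncard = 1 := by rw [Sset_one]; simp

open PowerSeries

noncomputable def cs (k : ℕ) : PowerSeries ℚ := PowerSeries.mk fun n => ((Sset k n).ncard : ℚ)

lemma cs_rec (k : ℕ) : cs (k+1) = 1 + X * (cs k * cs (k+1)) := by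
  ext n
  cases n with
  | zero =>
    rw [map_add, coeff_zero_X_mul]
    simp [cs, coeff_mk, ncard_Sset_zero]
  | succ n =>
    rw [map_add, coeff_succ_X_mul, PowerSeries.coeff_one, PowerSeries.coeff_mul,
      Finset.Nat.sum_antidiagonal_eq_sum_range_succ_mk]
    simp only [cs, coeff_mk, if_neg (Nat.succ_ne_zero n), zero_add]
    rw [ncard_step]
    push_cast
    rfl

lemma main_aux (m : ℕ) : cs (m+1) * (g (m+1) : PowerSeries ℚ) = (g m : PowerSeries ℚ) := by
  induction m with
  | zero =>
    have h1 : (g 1 : PowerSeries ℚ) = 1 - X := by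
      show ((1 - Polynomial.X : Polynomial ℚ) : PowerSeries ℚ) = 1 - X
      rw [Polynomial.coe_sub, Polynomial.coe_one, Polynomial.coe_X]
    have h0 : (g 0 : PowerSeries ℚ) = 1 := by
      show ((1 : Polynomial ℚ) : PowerSeries ℚ) = 1
      rw [Polynomial.coe_one]
    rw [h1, h0, mul_sub, mul_one, mul_comm]
    ext n
    rw [map_sub]
    cases n with
    | zero => rw [coeff_zero_X_mul]; simp [cs, coeff_mk, ncard_Sset_zero]
    | succ n =>
      rw [coeff_succ_X_mul]
      simp [cs, coeff_mk, ncard_Sset_one, if_neg (Nat.succ_ne_zero n)]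
  | succ m ih =>
    have hg : (g (m+2) : PowerSeries ℚ)
        = (g (m+1) : PowerSeries ℚ) - X * (g m : PowerSeries ℚ) := by
      show ((g (m+1) - Polynomial.X * g m : Polynomial ℚ) : PowerSeries ℚ) = _
      rw [Polynomial.coe_sub, Polynomial.coe_mul, Polynomial.coe_X]
    rw [hg]
    have h2 := cs_rec (m+1)
    linear_combination (X * cs (m+2)) * ih + ((g (m+1) : Polynomial ℚ) : PowerSeries ℚ) * h2

open PowerSeries in
theorem bounded_catalan_words_gf (k : ℕ) (hk : 1 ≤ k) :
    (PowerSeries.mk fun n =>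
        (({w : List ℕ | IsCatalanWord w ∧ w.length = n ∧ ∀ a ∈ w, a ≤ k}.ncard : ℚ))) *
      (g k : PowerSeries ℚ) = (g (k - 1) : PowerSeries ℚ) := by
  obtain ⟨m, rfl⟩ : ∃ m, k = m + 1 := ⟨k - 1, by omega⟩
  exact main_aux m
end

section
/- The number of Catalan words of length n with all letters at most 3 equals the (2n+1)-st Fibonacci-type value: it satisfies f(n) = 3 f(n-1) - f(n-2) for n ≥ 2 with f(0) = 1, f(1) = 1 (so f = 1, 1, 2, 5, 13, 34, ..., the odd-indexed Fibonacci numbers). -/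
/-- Number of Catalan words of length `n` with all letters at most `3`. -/
noncomputable def f3 (n : ℕ) : ℕ :=
  {w : List ℕ | IsCatalanWord w ∧ w.length = n ∧ ∀ a ∈ w, a ≤ 3}.ncard

/-- Allowed extensions of a word. -/
def extSet (v : List ℕ) : Finset ℕ :=
  ({1, 2, 3} : Finset ℕ).filter (fun b => (v = [] → b = 1) ∧ ∀ a ∈ v.getLast?, b ≤ a + 1)

/-- Finset of Catalan words of length n with letters ≤ 3. -/
def CW : ℕ → Finset (List ℕ)
  | 0 => {[]}
  | n + 1 => (CW n).biUnion fun v => (extSet v).image (fun b => v ++ [b])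

lemma mem_extSet (v : List ℕ) (b : ℕ) :
    b ∈ extSet v ↔ ((1 ≤ b ∧ b ≤ 3) ∧ (v = [] → b = 1) ∧ ∀ a ∈ v.getLast?, b ≤ a + 1) := by
  simp only [extSet, Finset.mem_filter, Finset.mem_insert, Finset.mem_singleton]
  constructor
  · rintro ⟨h1, h2⟩; exact ⟨by omega, h2⟩
  · rintro ⟨h1, h2⟩; exact ⟨by omega, h2⟩

lemma concat_cond (v : List ℕ) (b : ℕ) :
    (IsCatalanWord (v ++ [b]) ∧ ∀ a ∈ v ++ [b], a ≤ 3) ↔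
      ((IsCatalanWord v ∧ ∀ a ∈ v, a ≤ 3) ∧ b ∈ extSet v) := by
  rw [mem_extSet]
  cases v with
  | nil =>
      simp [IsCatalanWord, List.Chain']
      omega
  | cons x xs =>
      constructor
      · rintro ⟨⟨hh, hp, hc⟩, h3⟩
        unfold List.Chain' at hc; rw [List.isChain_append] at hc
        obtain ⟨c1, -, c3⟩ := hc
        have hx : x = 1 := by simpa using hh
        refine ⟨⟨⟨by simpa using hx, fun a ha => hp a (List.mem_append_left _ ha), c1⟩,
            fun a ha => h3 a (List.mem_append_left _ ha)⟩,
          ⟨hp b (by simp), h3 b (by simp)⟩, by simp, fun a ha => c3 a ha b rfl⟩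
      · rintro ⟨⟨⟨hh, hp, hc⟩, h3⟩, ⟨hb1, hb3⟩, -, hlast⟩
        have hx : x = 1 := by simpa using hh
        refine ⟨⟨by simpa using hx, ?_, ?_⟩, ?_⟩
        · intro a ha
          rcases List.mem_append.1 ha with h | h
          · exact hp a h
          · simp at h; omega
        · unfold List.Chain'; rw [List.isChain_append]
          refine ⟨hc, List.isChain_singleton b, fun z hz y hy => ?_⟩
          simp only [List.head?_cons, Option.mem_def, Option.some.injEq] at hy
          subst hy
          exact hlast z hz
        · intro a ha
          rcases List.mem_append.1 ha with h | h
          · exact h3 a h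
          · simp at h; omega

lemma mem_CW (n : ℕ) (w : List ℕ) :
    w ∈ CW n ↔ IsCatalanWord w ∧ w.length = n ∧ ∀ a ∈ w, a ≤ 3 := by
  induction n generalizing w with
  | zero =>
      simp only [CW, Finset.mem_singleton]
      constructor
      · rintro rfl
        exact ⟨⟨by simp, by simp, by simp [List.Chain']⟩, rfl, by simp⟩
      · rintro ⟨-, h, -⟩
        exact List.length_eq_zero_iff.1 h
  | succ n ih =>
      simp only [CW, Finset.mem_biUnion, Finset.mem_image]
      constructor
      · rintro ⟨v, hv, b, hb, rfl⟩
        obtain ⟨h1, h2, h3⟩ := (ih v).1 hv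
        obtain ⟨c1, c2⟩ := (concat_cond v b).2 ⟨⟨h1, h3⟩, hb⟩
        exact ⟨c1, by simp [h2], c2⟩
      · rintro ⟨h1, h2, h3⟩
        have hw : w ≠ [] := by
          intro h; subst h; simp at h2
        have hsplit : w.dropLast ++ [w.getLast hw] = w := List.dropLast_append_getLast hw
        refine ⟨w.dropLast, ?_, w.getLast hw, ?_, hsplit⟩
        · have hc := (concat_cond w.dropLast (w.getLast hw)).1 (by rw [hsplit]; exact ⟨h1, h3⟩)
          exact (ih _).2 ⟨hc.1.1, by rw [List.length_dropLast, h2]; omega, hc.1.2⟩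
        · exact ((concat_cond w.dropLast (w.getLast hw)).1 (by rw [hsplit]; exact ⟨h1, h3⟩)).2

lemma f3_eq (n : ℕ) : f3 n = (CW n).card := by
  rw [f3]
  have : {w : List ℕ | IsCatalanWord w ∧ w.length = n ∧ ∀ a ∈ w, a ≤ 3} = ↑(CW n) := by
    ext w
    simpa using (mem_CW n w).symm
  rw [this, Set.ncard_coe_finset]

lemma card_extSet {n : ℕ} {v : List ℕ} (hv : v ∈ CW n) (hn : v ≠ []) :
    (extSet v).card = if v.getLast? = some 1 then 2 else 3 := by
  obtain ⟨⟨-, hpos, -⟩, -, hle⟩ := (mem_CW n v).1 hv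
  set a := v.getLast hn with ha
  have hga : v.getLast? = some a := List.getLast?_eq_getLast hn
  have ham : a ∈ v := List.getLast_mem hn
  have h1 : 1 ≤ a := hpos a ham
  have h3 : a ≤ 3 := hle a ham
  have heq : extSet v = ({1, 2, 3} : Finset ℕ).filter (fun b => b ≤ a + 1) := by
    ext b
    simp [extSet, hga, hn]
  rw [heq, hga]
  interval_cases a
  · norm_num
    decide
  · norm_num
    decide
  · norm_num
    decide

lemma lastOne_succ (n : ℕ) :
    ((CW (n + 1)).filter (fun w => w.getLast? = some 1)).card = (CW n).card := by
  have hset : (CW (n + 1)).filter (fun w => w.getLast? = some 1)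
      = (CW n).image (fun v => v ++ [1]) := by
    ext w
    simp only [Finset.mem_filter, Finset.mem_image, CW, Finset.mem_biUnion]
    constructor
    · rintro ⟨⟨v, hv, b, hb, rfl⟩, hl⟩
      rw [List.getLast?_concat] at hl
      simp only [Option.some.injEq] at hl
      subst hl
      exact ⟨v, hv, rfl⟩
    · rintro ⟨v, hv, rfl⟩
      refine ⟨⟨v, hv, 1, ?_, rfl⟩, List.getLast?_concat⟩
      rw [mem_extSet]
      refine ⟨⟨le_refl 1, by omega⟩, fun _ => rfl, fun a _ => by omega⟩
  rw [hset]
  apply Finset.card_image_of_injective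
  intro x y h
  exact List.append_cancel_right h

lemma step (n : ℕ) (hn : 1 ≤ n) :
    (CW (n + 1)).card + ((CW n).filter (fun w => w.getLast? = some 1)).card
      = 3 * (CW n).card := by
  have hne : ∀ v ∈ CW n, v ≠ [] := by
    intro v hv h
    obtain ⟨-, hl, -⟩ := (mem_CW n v).1 hv
    subst h; simp at hl; omega
  have hcard : (CW (n + 1)).card = ∑ v ∈ CW n, (extSet v).card := by
    rw [show CW (n + 1) = (CW n).biUnion fun v => (extSet v).image (fun b => v ++ [b]) from rfl]
    rw [Finset.card_biUnion]
    · apply Finset.sum_congr rfl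
      intro v _
      apply Finset.card_image_of_injective
      intro x y h
      simpa using List.append_cancel_left h
    · intro x hx y hy hxy
      simp only [Finset.disjoint_left, Finset.mem_image]
      rintro w ⟨b, hb, rfl⟩ ⟨c, hc, hEq⟩
      have hlen : y.length = x.length := by
        obtain ⟨-, hx', -⟩ := (mem_CW n x).1 hx
        obtain ⟨-, hy', -⟩ := (mem_CW n y).1 hy
        rw [hx', hy']
      obtain ⟨h1, -⟩ := List.append_inj hEq hlen
      exact hxy h1.symm
  rw [hcard]
  have hsum : ∑ v ∈ CW n, (extSet v).card
      = ∑ v ∈ (CW n).filter (fun w => w.getLast? = some 1), 2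
        + ∑ v ∈ (CW n).filter (fun w => ¬ w.getLast? = some 1), 3 := by
    rw [← Finset.sum_filter_add_sum_filter_not (CW n) (fun w => w.getLast? = some 1)]
    congr 1
    · apply Finset.sum_congr rfl
      intro v hv
      rw [card_extSet (Finset.mem_filter.1 hv).1 (hne v (Finset.mem_filter.1 hv).1)]
      simp [(Finset.mem_filter.1 hv).2]
    · apply Finset.sum_congr rfl
      intro v hv
      rw [card_extSet (Finset.mem_filter.1 hv).1 (hne v (Finset.mem_filter.1 hv).1)]
      simp [(Finset.mem_filter.1 hv).2]
  rw [hsum]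
  simp only [Finset.sum_const, smul_eq_mul]
  have := Finset.card_filter_add_card_filter_not (s := CW n)
    (p := fun w => w.getLast? = some 1)
  omega

theorem catalan_words_letters_le_three_recurrence :
    f3 0 = 1 ∧ f3 1 = 1 ∧ ∀ n : ℕ, 2 ≤ n → f3 n = 3 * f3 (n - 1) - f3 (n - 2) := by
  refine ⟨by rw [f3_eq]; decide, by rw [f3_eq]; decide, ?_⟩
  intro n hn
  obtain ⟨m, rfl⟩ : ∃ m, n = m + 2 := ⟨n - 2, by omega⟩
  have h1 := step (m + 1) (by omega)
  have h2 := lastOne_succ m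
  rw [h2] at h1
  have h1' : (CW (m + 2)).card + (CW m).card = 3 * (CW (m + 1)).card := h1
  rw [show m + 2 - 1 = m + 1 from rfl, show m + 2 - 2 = m from rfl]
  rw [f3_eq, f3_eq, f3_eq]
  omega
end
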